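/- Let T ∈ ℝ^{n×n}, k ≥ 1, ε > 0, and let x* be a unit vector attaining ‖T^k x*‖ = ‖T^k‖. If x₁ is a unit vector with ‖x* − x₁‖ ≤ (ε / ‖T^k‖^(1/k))^k (assuming T^k ≠ 0), then ‖T^k‖^(1/k) − ‖T^k x₁‖^(1/k) ≤ ε. -/

import Mathlib

/-! Because `x*` attains the operator norm, `‖T^k‖ - ‖T^k x₁‖ ≤ ‖T^k‖ ‖x* - x₁‖ ≤ ε^k`, and the
subadditivity of `t ↦ t^(1/k)` on `[0, ∞)` turns a gap of at most `ε^k` into a gap of at most `ε`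
between `k`-th roots. -/

open Matrix

theorem Real.rpow_sub_rpow_le_rpow_of_sub_le {p a b c : ℝ} (ha : 0 ≤ a) (hb : 0 ≤ b) (hc : 0 ≤ c)
    (hbc : b - a ≤ c) (hp : 0 ≤ p) (hp1 : p ≤ 1) : b ^ p - a ^ p ≤ c ^ p := by
  rcases le_total b a with hba | hab
  · have := Real.rpow_le_rpow hb hba hp
    have := Real.rpow_nonneg hc p
    linarith
  · calc b ^ p - a ^ p = ((b - a) + a) ^ p - a ^ p := by rw [sub_add_cancel]
      _ ≤ (b - a) ^ p := by
        linarith [Real.rpow_add_le_add_rpow (sub_nonneg.2 hab) ha hp hp1]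
      _ ≤ c ^ p := Real.rpow_le_rpow (sub_nonneg.2 hab) hbc hp

theorem ContinuousLinearMap.opNorm_sub_norm_apply_le_of_norm_apply_eq {𝕜 E F : Type*}
    [NontriviallyNormedField 𝕜] [SeminormedAddCommGroup E] [NormedSpace 𝕜 E]
    [SeminormedAddCommGroup F] [NormedSpace 𝕜 F] (A : E →L[𝕜] F) {x y : E}
    (hx : ‖A x‖ = ‖A‖) : ‖A‖ - ‖A y‖ ≤ ‖A‖ * ‖x - y‖ :=
  calc ‖A‖ - ‖A y‖ = ‖A x‖ - ‖A y‖ := by rw [hx]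
    _ ≤ ‖A x - A y‖ := norm_sub_norm_le _ _
    _ = ‖A (x - y)‖ := by rw [map_sub]
    _ ≤ ‖A‖ * ‖x - y‖ := A.le_opNorm _

theorem near_maximizer_root_close_general (n : ℕ) (T : Matrix (Fin n) (Fin n) ℝ)
    (k : ℕ) (hk : 1 ≤ k) (ε : ℝ) (hε : 0 < ε)
    (xstar x₁ : EuclideanSpace ℝ (Fin n))
    (hTk : (Matrix.toEuclideanCLM (𝕜 := ℝ) T) ^ k ≠ 0)
    (hmax : ‖((Matrix.toEuclideanCLM (𝕜 := ℝ) T) ^ k) xstar‖ =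
      ‖(Matrix.toEuclideanCLM (𝕜 := ℝ) T) ^ k‖)
    (hclose : ‖xstar - x₁‖ ≤
      (ε / ‖(Matrix.toEuclideanCLM (𝕜 := ℝ) T) ^ k‖ ^ ((1 : ℝ) / k)) ^ k) :
    ‖(Matrix.toEuclideanCLM (𝕜 := ℝ) T) ^ k‖ ^ ((1 : ℝ) / k) -
      ‖((Matrix.toEuclideanCLM (𝕜 := ℝ) T) ^ k) x₁‖ ^ ((1 : ℝ) / k) ≤ ε := by
  set A := Matrix.toEuclideanCLM (𝕜 := ℝ) T ^ k
  have hk0 : k ≠ 0 := by omega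
  have hA : 0 < ‖A‖ := norm_pos_iff.2 hTk
  have hgap : ‖A‖ - ‖A x₁‖ ≤ ε ^ k :=
    calc ‖A‖ - ‖A x₁‖ ≤ ‖A‖ * ‖xstar - x₁‖ := A.opNorm_sub_norm_apply_le_of_norm_apply_eq hmax
      _ ≤ ‖A‖ * (ε / ‖A‖ ^ ((1 : ℝ) / k)) ^ k := by gcongr
      _ = ε ^ k := by
        rw [div_pow, one_div, Real.rpow_inv_natCast_pow hA.le hk0]
        field_simp
  calc ‖A‖ ^ ((1 : ℝ) / k) - ‖A x₁‖ ^ ((1 : ℝ) / k) ≤ (ε ^ k) ^ ((1 : ℝ) / k) :=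
        Real.rpow_sub_rpow_le_rpow_of_sub_le (norm_nonneg _) (norm_nonneg _) (by positivity) hgap
          (by positivity) (div_le_one_of_le₀ (by exact_mod_cast hk) (Nat.cast_nonneg k))
    _ = ε := by rw [one_div, Real.pow_rpow_inv_natCast hε.le hk0]

theorem near_maximizer_root_close (n : ℕ) (T : Matrix (Fin n) (Fin n) ℝ)
    (k : ℕ) (hk : 1 ≤ k) (ε : ℝ) (hε : 0 < ε)
    (xstar x₁ : EuclideanSpace ℝ (Fin n))
    (hxstar : ‖xstar‖ = 1) (hx₁ : ‖x₁‖ = 1)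
    (hTk : (Matrix.toEuclideanCLM (𝕜 := ℝ) T) ^ k ≠ 0)
    (hmax : ‖((Matrix.toEuclideanCLM (𝕜 := ℝ) T) ^ k) xstar‖ =
      ‖(Matrix.toEuclideanCLM (𝕜 := ℝ) T) ^ k‖)
    (hclose : ‖xstar - x₁‖ ≤
      (ε / ‖(Matrix.toEuclideanCLM (𝕜 := ℝ) T) ^ k‖ ^ ((1 : ℝ) / k)) ^ k) :
    ‖(Matrix.toEuclideanCLM (𝕜 := ℝ) T) ^ k‖ ^ ((1 : ℝ) / k) -
      ‖((Matrix.toEuclideanCLM (𝕜 := ℝ) T) ^ k) x₁‖ ^ ((1 : ℝ) / k) ≤ ε :=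
  near_maximizer_root_close_general n T k hk ε hε xstar x₁ hTk hmax hclose
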